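/- arXiv:1209.4677 — 5 statements merged into one kernel-verified Lean document; each statement's English description precedes it below -/
import Mathlib

section
/- If V is a framed vertex operator algebra with Virasoro frame T_n and D is its 1/16-code, then every codeword β in D has weight divisible by 8 (i.e., D is triply even). -/
/-- Hamming weight of a binary word. -/
def wt {ι : Type*} [Fintype ι] (x : ι → ZMod 2) : ℕ :=
  (Finset.univ.filter fun i => x i ≠ 0).card

/-!
The conformal weights `0, 1/2, 1/16` of `L(1/2, 0), L(1/2, 1/2), L(1/2, 1/16)` become `0, 8, 1`
after multiplying by `16`, so `16 h_i` is the indicator of `β_i = 1` up to a multiple of `8`.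
Summing, `wt β ≡ 16 ∑ h_i (mod 8)`, and `∑ h_i` is an integer because `V` is `ℤ`-graded.
-/

theorem cast_wt_eq_sum_ite {ι : Type*} [Fintype ι] {R : Type*} [AddCommMonoidWithOne R]
    (x : ι → ZMod 2) : (wt x : R) = ∑ i, if x i = 1 then 1 else 0 := by
  have hne : ∀ a : ZMod 2, a ≠ 0 ↔ a = 1 := by decide
  simp only [wt, hne, Finset.sum_boole]

theorem exists_sixteen_mul_eq_ite_add_eight_mul {b : ZMod 2} {q : ℚ}
    (hq : if b = 1 then q = 1/16 else (q = 0 ∨ q = 1/2)) :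
    ∃ m : ℤ, 16 * q = (if b = 1 then 1 else 0) + 8 * m := by
  split_ifs at hq ⊢ with hb
  · exact ⟨0, by rw [hq]; norm_num⟩
  · rcases hq with rfl | rfl
    · exact ⟨0, by norm_num⟩
    · exact ⟨1, by norm_num⟩

/-- The encoding of the framed VOA: for `β ∈ D`, `h` lists the highest weights `h_i` of an
irreducible `T_n`-submodule `L(1/2,h_1) ⊗ ⋯ ⊗ L(1/2,h_n)` with `τ = β`, and its top weight
`∑ i, h i` is an integer because `V` is `ℤ`-graded. -/
theorem weight_one_sixteenth_code_triply_even (n : ℕ) (D : Set (Fin n → ZMod 2))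
    (hframe : ∀ β ∈ D, ∃ h : Fin n → ℚ,
      (∀ i, if β i = 1 then h i = 1/16 else (h i = 0 ∨ h i = 1/2)) ∧
      ∃ k : ℤ, ∑ i, h i = (k : ℚ)) :
    ∀ β ∈ D, 8 ∣ wt β := by
  intro β hβ
  obtain ⟨h, hh, k, hk⟩ := hframe β hβ
  choose m hm using fun i => exists_sixteen_mul_eq_ite_add_eight_mul (hh i)
  have hwt : (wt β : ℚ) = 16 * k - 8 * ∑ i, m i := by
    rw [cast_wt_eq_sum_ite, ← hk]
    push_cast
    rw [Finset.mul_sum, Finset.mul_sum, ← Finset.sum_sub_distrib]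
    exact Finset.sum_congr rfl fun i _ => by rw [hm i]; ring
  have hwt_int : (wt β : ℤ) = 8 * (2 * k - ∑ i, m i) := by
    rw [mul_sub, ← mul_assoc]
    exact_mod_cast hwt
  exact Int.natCast_dvd_natCast.mp ⟨_, hwt_int⟩
end

section
/- Let D be a binary code of length n. For γ ∈ F_2^n define η(γ): D → F_2^n/D^⊥ by η(γ)(β) = γ·β + D^⊥, where γ·β denotes the coordinatewise product. Then the kernel of η equals (D·D)^⊥, where D·D is the span of all coordinatewise products β·β' with β, β' ∈ D. Consequently dim(image of η) = dim(D·D). -/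
def dualCode {ι : Type*} [Fintype ι] (D : Submodule (ZMod 2) (ι → ZMod 2)) :
    Submodule (ZMod 2) (ι → ZMod 2) where
  carrier := {x | ∀ y ∈ D, dotProduct x y = 0}
  add_mem' := fun ha hb y hy => by
    simp only [add_dotProduct]
    rw [ha y hy, hb y hy, add_zero]
  zero_mem' := fun y hy => by simp
  smul_mem' := fun c x hx y hy => by
    simp only [smul_dotProduct]
    rw [hx y hy, smul_zero]

def DdotD {ι : Type*} [Fintype ι] (D : Submodule (ZMod 2) (ι → ZMod 2)) :
    Submodule (ZMod 2) (ι → ZMod 2) :=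
  Submodule.span (ZMod 2) {z | ∃ a ∈ D, ∃ b ∈ D, z = a * b}

def dotL {ι : Type*} [Fintype ι] (β : ι → ZMod 2) : (ι → ZMod 2) →ₗ[ZMod 2] ZMod 2 where
  toFun γ := dotProduct γ β
  map_add' a b := add_dotProduct a b β
  map_smul' c a := smul_dotProduct c a β

def qpair {ι : Type*} [Fintype ι] (D : Submodule (ZMod 2) (ι → ZMod 2)) (β : ι → ZMod 2)
    (hβ : β ∈ D) : ((ι → ZMod 2) ⧸ dualCode D) →ₗ[ZMod 2] ZMod 2 :=
  Submodule.liftQ (dualCode D) (dotL β) (fun γ hγ => LinearMap.mem_ker.mpr (hγ β hβ))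

def eta {ι : Type*} [Fintype ι] (D : Submodule (ZMod 2) (ι → ZMod 2)) (γ : ι → ZMod 2) :
    (↥D) →ₗ[ZMod 2] ((ι → ZMod 2) ⧸ dualCode D) where
  toFun β := Submodule.Quotient.mk (γ * ↑β)
  map_add' a b := by
    simp only [Submodule.coe_add, mul_add, ← Submodule.Quotient.mk_add]
  map_smul' c a := by
    simp only [Submodule.coe_smul, mul_smul_comm, ← Submodule.Quotient.mk_smul, RingHom.id_apply]

def etaMap {ι : Type*} [Fintype ι] (D : Submodule (ZMod 2) (ι → ZMod 2)) :
    (ι → ZMod 2) →ₗ[ZMod 2] ((↥D) →ₗ[ZMod 2] ((ι → ZMod 2) ⧸ dualCode D)) where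
  toFun := eta D
  map_add' a b := LinearMap.ext fun β => by
    simp only [eta, LinearMap.coe_mk, AddHom.coe_mk, LinearMap.add_apply, add_mul,
      ← Submodule.Quotient.mk_add] <;> rfl
  map_smul' c a := LinearMap.ext fun β => by
    simp only [eta, LinearMap.coe_mk, AddHom.coe_mk, LinearMap.smul_apply, smul_mul_assoc,
      ← Submodule.Quotient.mk_smul, RingHom.id_apply] <;> rfl

/-! The pairing `⟨γ·a, b⟩ = ⟨γ, a·b⟩` shows that `η(γ) = 0`, i.e. `γ·a ∈ D^⊥` for all `a ∈ D`,
exactly when `γ` is orthogonal to every product `a·b` of codewords, i.e. to `D·D`.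
The dimension count is rank–nullity together with `dim W + dim W^⊥ = n`, which holds because
the dot product identifies `W^⊥` with the annihilator of `W` in the dual space. -/

section

variable {ι : Type*} [Fintype ι]

theorem mul_dotProduct_eq_dotProduct_mul {R : Type*} [NonUnitalSemiring R] (x y z : ι → R) :
    (x * y) ⬝ᵥ z = x ⬝ᵥ (y * z) :=
  Finset.sum_congr rfl fun i _ => mul_assoc (x i) (y i) (z i)

theorem dualCode_eq_map_dualAnnihilator [DecidableEq ι] (W : Submodule (ZMod 2) (ι → ZMod 2)) :
    dualCode W = W.dualAnnihilator.map (dotProductEquiv (ZMod 2) ι).symm.toLinearMap := by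
  ext x
  rw [Submodule.mem_map_equiv, LinearEquiv.symm_symm, Submodule.mem_dualAnnihilator]
  rfl

theorem finrank_add_finrank_dualCode (W : Submodule (ZMod 2) (ι → ZMod 2)) :
    Module.finrank (ZMod 2) W + Module.finrank (ZMod 2) (dualCode W) = Fintype.card ι := by
  classical
  rw [dualCode_eq_map_dualAnnihilator, LinearEquiv.finrank_map_eq,
    Subspace.finrank_add_finrank_dualAnnihilator_eq, Module.finrank_fintype_fun_eq_card]

theorem mem_dualCode_span_iff {S : Set (ι → ZMod 2)} {x : ι → ZMod 2} :
    x ∈ dualCode (Submodule.span (ZMod 2) S) ↔ ∀ z ∈ S, x ⬝ᵥ z = 0 := by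
  refine ⟨fun hx z hz => hx z (Submodule.subset_span hz), fun h y hy => ?_⟩
  have hspan : Submodule.span (ZMod 2) S ≤ LinearMap.ker (dotProductBilin (ZMod 2) (ZMod 2) x) :=
    Submodule.span_le.mpr h
  exact hspan hy

theorem mem_dualCode_DdotD_iff {D : Submodule (ZMod 2) (ι → ZMod 2)} {γ : ι → ZMod 2} :
    γ ∈ dualCode (DdotD D) ↔ ∀ a ∈ D, ∀ b ∈ D, γ ⬝ᵥ (a * b) = 0 := by
  simp only [DdotD, mem_dualCode_span_iff, Set.mem_ofPred_eq, forall_exists_index, and_imp]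
  exact ⟨fun h a ha b hb => h _ a ha b hb rfl, fun h _ a ha b hb hz => hz ▸ h a ha b hb⟩

theorem mem_ker_etaMap_iff {D : Submodule (ZMod 2) (ι → ZMod 2)} {γ : ι → ZMod 2} :
    γ ∈ LinearMap.ker (etaMap D) ↔ ∀ a ∈ D, γ * a ∈ dualCode D := by
  rw [LinearMap.mem_ker, LinearMap.ext_iff, Subtype.forall]
  exact forall₂_congr fun a _ => Submodule.Quotient.mk_eq_zero (dualCode D)

theorem ker_etaMap (D : Submodule (ZMod 2) (ι → ZMod 2)) :
    LinearMap.ker (etaMap D) = dualCode (DdotD D) := by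
  ext γ
  rw [mem_ker_etaMap_iff, mem_dualCode_DdotD_iff]
  refine forall₂_congr fun a _ => forall₂_congr fun b _ => ?_
  rw [mul_dotProduct_eq_dotProduct_mul]

theorem finrank_range_etaMap (D : Submodule (ZMod 2) (ι → ZMod 2)) :
    Module.finrank (ZMod 2) (LinearMap.range (etaMap D)) =
      Module.finrank (ZMod 2) (DdotD D) := by
  have rank_nullity := LinearMap.finrank_range_add_finrank_ker (etaMap D)
  rw [ker_etaMap, Module.finrank_fintype_fun_eq_card, ← finrank_add_finrank_dualCode (DdotD D)]
    at rank_nullity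
  exact Nat.add_right_cancel rank_nullity

end

/-- For a binary code `D ⊆ F₂ⁿ` and `γ ∈ F₂ⁿ`, let `η(γ) : D → F₂ⁿ/D^⊥` be
`β ↦ γ·β + D^⊥` (coordinatewise product).  Then `ker η = (D·D)^⊥` and consequently
`dim (im η) = dim (D·D)`. -/
theorem ker_eta_eq_dual_DdotD (n : ℕ) (D : Submodule (ZMod 2) (Fin n → ZMod 2)) :
    LinearMap.ker (etaMap D) = dualCode (DdotD D) ∧
    Module.finrank (ZMod 2) (LinearMap.range (etaMap D)) =
      Module.finrank (ZMod 2) (DdotD D) :=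
  ⟨ker_etaMap D, finrank_range_etaMap D⟩
end

section
/- Let D^{ex} ⊂ F_2^48 be the 9-dimensional exceptional triply even code of length 48 (generated by the appended triangular-graph code and the all-one vector). Then dim(D^{ex}·D^{ex}) = 37 = C(9,2) + 1, where D^{ex}·D^{ex} is the span of all coordinatewise products of pairs of codewords. -/
/-!
Since `γ_{{i,j}} = γ_{{0,i}} + γ_{{0,j}}` for `i, j ≠ 0`, `D^{ex} = U + ⟨1⟩` with `U` spanned by the
nine vectors `ι(γ_{{0,i}})`. Every vector over `F₂` is idempotent, so `U ≤ U·U` and hence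
`D^{ex}·D^{ex} = U·U + ⟨1⟩`. The square `γ_{{0,i}}` is a sum of products `γ_{{0,i}}·γ_{{0,j}}` with
`j ≠ i`, so `U·U` is spanned by the 36 products with `0 < i < j`. These are independent because on
the pairs avoiding `0` they restrict to the unit vectors, and `1 ∉ U·U` because all of `U` vanishes
on the three appended coordinates.
-/

/-- `Ω`: the set of 2-element subsets of `X = {1,…,10}`. -/
def TwoSubset : Type := {S : Finset (Fin 10) // S.card = 2}

instance : Fintype TwoSubset := by unfold TwoSubset; infer_instance
instance : DecidableEq TwoSubset := by unfold TwoSubset; infer_instance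

/-- `γ_{{i,j}} ∈ F₂^Ω`: the characteristic vector of `{S ∈ Ω : |S ∩ {i,j}| = 1}`. -/
def triGamma (p : TwoSubset) : TwoSubset → ZMod 2 :=
  fun S => if (S.1 ∩ p.1).card = 1 then 1 else 0

/-- `ι : F₂^45 → F₂^48` appending three zero coordinates. -/
def iotaExt (v : TwoSubset → ZMod 2) : TwoSubset ⊕ Fin 3 → ZMod 2 :=
  Sum.elim v 0

/-- The exceptional triply even code `D^{ex}` of length 48: generated by the (appended)
rows `ι(γ_{{i,j}})` of the incidence matrix of the triangular graph on 10 points together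
with the all-one vector. -/
def Dex : Submodule (ZMod 2) (TwoSubset ⊕ Fin 3 → ZMod 2) :=
  Submodule.span (ZMod 2)
    (Set.range (fun p => iotaExt (triGamma p)) ∪ {(1 : TwoSubset ⊕ Fin 3 → ZMod 2)})

open Module Submodule

theorem DdotD_eq_mul {ι : Type*} [Fintype ι] (D : Submodule (ZMod 2) (ι → ZMod 2)) :
    DdotD D = D * D := by
  rw [DdotD, mul_eq_span_mul_set]
  congr 1
  ext z
  simp only [Set.mem_ofPred_eq, Set.mem_mul, SetLike.mem_coe, eq_comm]

theorem Pi.isIdempotentElem_zmod_two {ι : Type*} (f : ι → ZMod 2) : IsIdempotentElem f := by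
  funext x
  simpa [sq] using ZMod.pow_card (f x)

namespace Submodule

variable {R A : Type*} [CommSemiring R] [Semiring A] [Algebra R A]

theorem le_mul_self_of_isIdempotentElem {N : Submodule R A} (h : ∀ a ∈ N, IsIdempotentElem a) :
    N ≤ N * N := fun a ha => (h a ha).eq ▸ mul_mem_mul ha ha

theorem sup_one_mul_sup_one {N : Submodule R A} (h : N ≤ N * N) :
    (N ⊔ 1) * (N ⊔ 1) = N * N ⊔ 1 := by
  rw [mul_sup, sup_mul, sup_mul, mul_one, one_mul, one_mul, sup_eq_left.mpr h, ← sup_assoc,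
    sup_eq_left.mpr h]

end Submodule

namespace Dex

/-- `ι(γ_{{i,j}})` as a function of the two points. -/
def gamma (i j : Fin 10) : TwoSubset ⊕ Fin 3 → ZMod 2 :=
  iotaExt fun S => if (S.1 ∩ {i, j}).card = 1 then 1 else 0

theorem iotaExt_triGamma {p : TwoSubset} {i j : Fin 10} (hp : p.1 = {i, j}) :
    iotaExt (triGamma p) = gamma i j := by
  rw [gamma, ← hp]
  rfl

theorem gamma_comm (i j : Fin 10) : gamma i j = gamma j i := by
  rw [gamma, gamma, Finset.pair_comm]

theorem gamma_apply_inr (i j : Fin 10) (k : Fin 3) : gamma i j (.inr k) = 0 := rfl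

set_option maxRecDepth 100000 in
theorem gamma_eq_add {i j : Fin 10} (hi : i ≠ 0) (hj : j ≠ 0) (hij : i ≠ j) :
    gamma i j = gamma 0 i + gamma 0 j := by
  have key : ∀ S : TwoSubset, ∀ i j : Fin 10, i ≠ 0 → j ≠ 0 → i ≠ j →
      gamma i j (.inl S) = gamma 0 i (.inl S) + gamma 0 j (.inl S) := by
    decide
  funext x
  rcases x with S | k
  · exact key S i j hi hj hij
  · simp [gamma_apply_inr]

set_option maxRecDepth 100000 in
theorem gamma_zero_eq_sum {i : Fin 10} (hi : i ≠ 0) :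
    gamma 0 i = ∑ j ∈ Finset.univ \ {0, i}, gamma 0 i * gamma 0 j := by
  have key : ∀ S : TwoSubset, ∀ i : Fin 10, i ≠ 0 → gamma 0 i (.inl S) =
      ∑ j ∈ Finset.univ \ {0, i}, gamma 0 i (.inl S) * gamma 0 j (.inl S) := by
    decide
  funext x
  rcases x with S | k
  · simpa [Finset.sum_apply] using key S i hi
  · simp [Finset.sum_apply, gamma_apply_inr]

abbrev Pair : Type := {p : Fin 10 × Fin 10 // 0 < p.1 ∧ p.1 < p.2}

def Pair.toTwoSubset (p : Pair) : TwoSubset := ⟨{p.1.1, p.1.2}, Finset.card_pair p.2.2.ne⟩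

def gammaProd (p : Pair) : TwoSubset ⊕ Fin 3 → ZMod 2 := gamma 0 p.1.1 * gamma 0 p.1.2

set_option maxRecDepth 100000 in
theorem gammaProd_apply_toTwoSubset :
    ∀ p q : Pair, gammaProd p (.inl q.toTwoSubset) = if q = p then 1 else 0 := by
  decide

theorem linearIndependent_gammaProd : LinearIndependent (ZMod 2) gammaProd := by
  apply LinearIndependent.of_comp
    (LinearMap.funLeft (ZMod 2) (ZMod 2) fun q : Pair => Sum.inl q.toTwoSubset)
  convert (Pi.basisFun (ZMod 2) Pair).linearIndependent
  funext p q
  simp [LinearMap.funLeft_apply, gammaProd_apply_toTwoSubset, Pi.single_apply]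

def U : Submodule (ZMod 2) (TwoSubset ⊕ Fin 3 → ZMod 2) :=
  span (ZMod 2) (Set.range fun i : {i : Fin 10 // i ≠ 0} => gamma 0 i)

theorem gamma_zero_mem_U {i : Fin 10} (hi : i ≠ 0) : gamma 0 i ∈ U :=
  subset_span ⟨⟨i, hi⟩, rfl⟩

theorem iotaExt_triGamma_mem_U (p : TwoSubset) : iotaExt (triGamma p) ∈ U := by
  obtain ⟨a, b, hab, hp⟩ := Finset.card_eq_two.mp p.2
  rw [iotaExt_triGamma hp]
  rcases eq_or_ne a 0 with rfl | ha
  · exact gamma_zero_mem_U hab.symm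
  rcases eq_or_ne b 0 with rfl | hb
  · exact gamma_comm a 0 ▸ gamma_zero_mem_U ha
  rw [gamma_eq_add ha hb hab]
  exact add_mem (gamma_zero_mem_U ha) (gamma_zero_mem_U hb)

theorem span_iotaExt_triGamma : span (ZMod 2) (Set.range fun p => iotaExt (triGamma p)) = U := by
  refine le_antisymm (span_le.mpr ?_) (span_le.mpr ?_)
  · rintro _ ⟨p, rfl⟩
    exact iotaExt_triGamma_mem_U p
  · rintro _ ⟨⟨i, hi⟩, rfl⟩
    exact subset_span ⟨⟨{0, i}, Finset.card_pair hi.symm⟩, iotaExt_triGamma rfl⟩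

theorem Dex_eq_U_sup_one : Dex = U ⊔ 1 := by
  rw [Dex, span_union, span_iotaExt_triGamma, one_eq_span]

theorem gamma_zero_mul_mem_of_ne {i j : Fin 10} (hi : i ≠ 0) (hj : j ≠ 0) (hij : i ≠ j) :
    gamma 0 i * gamma 0 j ∈ span (ZMod 2) (Set.range gammaProd) := by
  have hpos : ∀ {k : Fin 10}, k ≠ 0 → 0 < k := Fin.pos_iff_ne_zero.mpr
  rcases hij.lt_or_gt with h | h
  · exact subset_span ⟨⟨(i, j), hpos hi, h⟩, rfl⟩
  · exact mul_comm (gamma 0 j) _ ▸ subset_span ⟨⟨(j, i), hpos hj, h⟩, rfl⟩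

theorem gamma_zero_mul_mem {i j : Fin 10} (hi : i ≠ 0) (hj : j ≠ 0) :
    gamma 0 i * gamma 0 j ∈ span (ZMod 2) (Set.range gammaProd) := by
  rcases ne_or_eq i j with hij | rfl
  · exact gamma_zero_mul_mem_of_ne hi hj hij
  rw [(Pi.isIdempotentElem_zmod_two _).eq, gamma_zero_eq_sum hi]
  refine sum_mem fun k hk => gamma_zero_mul_mem_of_ne hi ?_ ?_ <;>
    · rintro rfl
      simp at hk

theorem U_mul_U : U * U = span (ZMod 2) (Set.range gammaProd) := by
  rw [U, span_mul_span]
  refine le_antisymm (span_le.mpr ?_) (span_le.mpr ?_)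
  · rintro _ ⟨_, ⟨⟨i, hi⟩, rfl⟩, _, ⟨⟨j, hj⟩, rfl⟩, rfl⟩
    exact gamma_zero_mul_mem hi hj
  · rintro _ ⟨⟨⟨i, j⟩, hi, hij⟩, rfl⟩
    exact subset_span (Set.mul_mem_mul ⟨⟨i, hi.ne'⟩, rfl⟩ ⟨⟨j, (hi.trans hij).ne'⟩, rfl⟩)

theorem finrank_U_mul_U : finrank (ZMod 2) (U * U) = 36 := by
  rw [U_mul_U, finrank_span_eq_card linearIndependent_gammaProd]
  rfl

theorem one_notMem_U_mul_U : (1 : TwoSubset ⊕ Fin 3 → ZMod 2) ∉ U * U := by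
  have hvanish : U * U ≤ LinearMap.ker (LinearMap.proj (R := ZMod 2) (Sum.inr 0)) := by
    rw [U_mul_U, span_le]
    rintro _ ⟨p, rfl⟩
    simp [gammaProd, gamma_apply_inr]
  intro h
  simpa using hvanish h

end Dex

/-- `dim (D^{ex}·D^{ex}) = 37 = C(9,2) + 1`. -/
theorem finrank_DdotD_Dex :
    Module.finrank (ZMod 2) ↥(DdotD Dex) = 37 ∧ 37 = Nat.choose 9 2 + 1 := by
  refine ⟨?_, rfl⟩
  rw [DdotD_eq_mul, Dex.Dex_eq_U_sup_one,
    sup_one_mul_sup_one (le_mul_self_of_isIdempotentElem fun a _ => Pi.isIdempotentElem_zmod_two a),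
    one_eq_span, finrank_sup_span_singleton Dex.one_notMem_U_mul_U, Dex.finrank_U_mul_U]
end

section
/- Let (R,q) be a nondegenerate quadratic space over F_2. Let S_1 be a totally singular subspace, S_2 ⊆ S_1 totally singular, P a nondegenerate subspace of S_1^⊥, Q a complement of S_1 in (S_1 ⊥ P)^⊥, T a complement of S_2 in (S_2 ⊥ P)^⊥, and φ : T → Q^⊥ an isomorphism of quadratic spaces. Then S := {(s_1+p+q, s_2+p+t, q+φ(t)) : s_i ∈ S_i, p ∈ P, q ∈ Q, t ∈ T} is a totally singular subspace of (R^3, q^3), where q^3(v_1,v_2,v_3) = q(v_1)+q(v_2)+q(v_3). -/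
/-! Every coordinate of a vector of `S` is a sum of pairwise orthogonal pieces, so `q` is additive
on it: the three coordinates have values `q p + q u`, `q p + q t` and `q u + q t` (the singular
parts `s₁, s₂` contribute nothing, and `φ` preserves `q`). Each of `q p`, `q u`, `q t` thus
occurs twice in `q³`, which vanishes in characteristic `2`. -/

open LinearMap (BilinForm)

namespace QuadraticMap

variable {K R N : Type*} [CommRing K] [AddCommGroup R] [Module K R] [AddCommGroup N]
  [Module K N] {q : QuadraticMap K R N}

theorem IsOrtho.add_left {x y z : R} (hxz : q.IsOrtho x z) (hyz : q.IsOrtho y z) :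
    q.IsOrtho (x + y) z := by
  rw [← isOrtho_polarBilin, map_add, LinearMap.add_apply, isOrtho_polarBilin.mpr hxz,
    isOrtho_polarBilin.mpr hyz, add_zero]

theorem map_singular_add_add {s p u : R} (hs : q s = 0) (hsp : q.IsOrtho s p)
    (hsu : q.IsOrtho s u) (hpu : q.IsOrtho p u) : q (s + p + u) = q p + q u := by
  rw [isOrtho_def.mp (hsu.add_left hpu), isOrtho_def.mp hsp, hs, zero_add]

theorem isOrtho_of_mem_orthogonal_sup_left {q : QuadraticForm K R} {A B : Submodule K R} {x y : R}
    (hx : x ∈ A) (hy : y ∈ BilinForm.orthogonal q.polarBilin (A ⊔ B)) : q.IsOrtho x y :=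
  isOrtho_polarBilin.mp (hy x (Submodule.mem_sup_left hx))

theorem isOrtho_of_mem_orthogonal_sup_right {q : QuadraticForm K R} {A B : Submodule K R} {x y : R}
    (hx : x ∈ B) (hy : y ∈ BilinForm.orthogonal q.polarBilin (A ⊔ B)) : q.IsOrtho x y :=
  isOrtho_polarBilin.mp (hy x (Submodule.mem_sup_right hx))

end QuadraticMap

section Construction

open QuadraticMap

variable {K R : Type*} [CommRing K] [AddCommGroup R] [Module K R]
  (S₁ S₂ P Q T : Submodule K R) (φ : T →ₗ[K] R)

def tripleParam : S₁ × S₂ × P × Q × T →ₗ[K] R × R × R where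
  toFun x := ((x.1 : R) + x.2.2.1 + x.2.2.2.1, (x.2.1 : R) + x.2.2.1 + x.2.2.2.2,
    (x.2.2.2.1 : R) + φ x.2.2.2.2)
  map_add' a b := by
    simp only [Prod.fst_add, Prod.snd_add, Submodule.coe_add, map_add, Prod.mk_add_mk]
    abel_nf
  map_smul' c a := by
    simp only [Prod.smul_fst, Prod.smul_snd, Submodule.coe_smul, map_smul, Prod.smul_mk,
      RingHom.id_apply, smul_add]

theorem coe_range_tripleParam :
    (LinearMap.range (tripleParam S₁ S₂ P Q T φ) : Set (R × R × R)) =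
      {x | ∃ s₁ ∈ S₁, ∃ s₂ ∈ S₂, ∃ p ∈ P, ∃ u ∈ Q, ∃ t : T,
        x = (s₁ + p + u, s₂ + p + (t : R), u + φ t)} := by
  ext x
  constructor
  · rintro ⟨⟨s₁, s₂, p, u, t⟩, rfl⟩
    exact ⟨s₁, s₁.2, s₂, s₂.2, p, p.2, u, u.2, t, rfl⟩
  · rintro ⟨s₁, hs₁, s₂, hs₂, p, hp, u, hu, t, rfl⟩
    exact ⟨(⟨s₁, hs₁⟩, ⟨s₂, hs₂⟩, ⟨p, hp⟩, ⟨u, hu⟩, t), rfl⟩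

theorem prod_prod_tripleParam_eq_zero [CharP K 2] (q : QuadraticForm K R)
    (hS₁ : ∀ x ∈ S₁, q x = 0) (hS₂₁ : S₂ ≤ S₁)
    (hPS₁ : P ≤ BilinForm.orthogonal q.polarBilin S₁)
    (hQ : Q ≤ BilinForm.orthogonal q.polarBilin (S₁ ⊔ P))
    (hT : T ≤ BilinForm.orthogonal q.polarBilin (S₂ ⊔ P))
    (hφQ : ∀ t, φ t ∈ BilinForm.orthogonal q.polarBilin Q) (hφ : ∀ t, q (φ t) = q t)
    (x : S₁ × S₂ × P × Q × T) :
    q.prod (q.prod q) (tripleParam S₁ S₂ P Q T φ x) = 0 := by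
  obtain ⟨⟨s₁, hs₁⟩, ⟨s₂, hs₂⟩, ⟨p, hp⟩, ⟨u, hu⟩, ⟨t, ht⟩⟩ := x
  have hPS₁' : ∀ s ∈ S₁, q.IsOrtho s p := fun s hs => isOrtho_polarBilin.mp (hPS₁ hp s hs)
  have h₁ : q (s₁ + p + u) = q p + q u :=
    map_singular_add_add (hS₁ s₁ hs₁) (hPS₁' s₁ hs₁)
      (isOrtho_of_mem_orthogonal_sup_left hs₁ (hQ hu))
      (isOrtho_of_mem_orthogonal_sup_right hp (hQ hu))
  have h₂ : q (s₂ + p + t) = q p + q t :=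
    map_singular_add_add (hS₁ s₂ (hS₂₁ hs₂)) (hPS₁' s₂ (hS₂₁ hs₂))
      (isOrtho_of_mem_orthogonal_sup_left hs₂ (hT ht))
      (isOrtho_of_mem_orthogonal_sup_right hp (hT ht))
  have h₃ : q (u + φ ⟨t, ht⟩) = q u + q t := by
    rw [isOrtho_def.mp (isOrtho_polarBilin.mp (hφQ _ u hu)), hφ]
  simp only [tripleParam, LinearMap.coe_mk, AddHom.coe_mk, prod_apply, h₁, h₂, h₃]
  linear_combination (CharTwo.two_eq_zero (R := K)) * (q p + q u + q t)

end Construction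

theorem totally_singular_S_general {R : Type*} [AddCommGroup R] [Module (ZMod 2) R]
    (q : QuadraticForm (ZMod 2) R)
    (S1 S2 P Q T : Submodule (ZMod 2) R)
    (hS1 : ∀ x ∈ S1, q x = 0) (hS21 : S2 ≤ S1)
    (hPS1 : P ≤ LinearMap.BilinForm.orthogonal (QuadraticMap.polarBilin q) S1)
    (hQ2 : Q ⊔ S1 = LinearMap.BilinForm.orthogonal (QuadraticMap.polarBilin q) (S1 ⊔ P))
    (hT2 : T ⊔ S2 = LinearMap.BilinForm.orthogonal (QuadraticMap.polarBilin q) (S2 ⊔ P))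
    (φ : ↥T ≃ₗ[ZMod 2]
      ↥(LinearMap.BilinForm.orthogonal (QuadraticMap.polarBilin q) Q))
    (hφ : ∀ t : ↥T, q ((φ t : R)) = q (t : R)) :
    ∃ W : Submodule (ZMod 2) (R × R × R),
      (W : Set (R × R × R)) =
        {x | ∃ s1 ∈ S1, ∃ s2 ∈ S2, ∃ p ∈ P, ∃ u ∈ Q, ∃ t : ↥T,
          x = (s1 + p + u, s2 + p + (t : R), u + (φ t : R))} ∧
      ∀ v ∈ W, (QuadraticMap.prod q (QuadraticMap.prod q q)) v = 0 := by
  let φR := (Submodule.subtype _).comp φ.toLinearMap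
  refine ⟨LinearMap.range (tripleParam S1 S2 P Q T φR),
    coe_range_tripleParam S1 S2 P Q T φR, ?_⟩
  rintro _ ⟨x, rfl⟩
  exact prod_prod_tripleParam_eq_zero S1 S2 P Q T φR q hS1 hS21 hPS1
    (hQ2 ▸ le_sup_left) (hT2 ▸ le_sup_left) (fun t => (φ t).2) hφ x

/-- Theorem 4.6(2) of Lam–Shimakura: given a nondegenerate quadratic space `(R,q)` over `F₂`,
totally singular subspaces `S₂ ⊆ S₁`, a nondegenerate subspace `P ⊆ S₁^⊥`, complements `Q`
of `S₁` in `(S₁ ⊥ P)^⊥` and `T` of `S₂` in `(S₂ ⊥ P)^⊥`, and an isomorphism `φ : T → Q^⊥` of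
quadratic spaces, the set
`S = {(s₁+p+q, s₂+p+t, q+φ(t))}` is a totally singular subspace of `(R³, q³)`. -/
theorem totally_singular_S {R : Type*} [AddCommGroup R] [Module (ZMod 2) R]
    (q : QuadraticForm (ZMod 2) R)
    (hnd : (QuadraticMap.polarBilin q).Nondegenerate)
    (S1 S2 P Q T : Submodule (ZMod 2) R)
    (hS1 : ∀ x ∈ S1, q x = 0) (hS21 : S2 ≤ S1)
    (hPS1 : P ≤ LinearMap.BilinForm.orthogonal (QuadraticMap.polarBilin q) S1)
    (hPnd : (LinearMap.BilinForm.restrict (QuadraticMap.polarBilin q) P).Nondegenerate)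
    (hQ1 : Q ⊓ S1 = ⊥)
    (hQ2 : Q ⊔ S1 = LinearMap.BilinForm.orthogonal (QuadraticMap.polarBilin q) (S1 ⊔ P))
    (hT1 : T ⊓ S2 = ⊥)
    (hT2 : T ⊔ S2 = LinearMap.BilinForm.orthogonal (QuadraticMap.polarBilin q) (S2 ⊔ P))
    (φ : ↥T ≃ₗ[ZMod 2]
      ↥(LinearMap.BilinForm.orthogonal (QuadraticMap.polarBilin q) Q))
    (hφ : ∀ t : ↥T, q ((φ t : R)) = q (t : R)) :
    ∃ W : Submodule (ZMod 2) (R × R × R),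
      (W : Set (R × R × R)) =
        {x | ∃ s1 ∈ S1, ∃ s2 ∈ S2, ∃ p ∈ P, ∃ u ∈ Q, ∃ t : ↥T,
          x = (s1 + p + u, s2 + p + (t : R), u + (φ t : R))} ∧
      ∀ v ∈ W, (QuadraticMap.prod q (QuadraticMap.prod q q)) v = 0 :=
  totally_singular_S_general q S1 S2 P Q T hS1 hS21 hPS1 hQ2 hT2 φ hφ
end

section
/- Let s be a root in the root lattice D_5 and let 2β + D_5 be the unique element of order 2 in D_5*/D_5, represented by a vector 2β such that 2β ∈ D_5* and 2(2β) ∈ D_5. Then s + 4β + 2D_5 and s + 2D_5 are conjugate under the Weyl group of D_5; i.e., there is a Weyl group element w with w(s) ∈ s + 4β + 2D_5. -/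
/-- Realize `D₅ = {x ∈ ℤ⁵ : Σ xᵢ even}` with roots `s` (i.e. `Σ sᵢ² = 2`); the order-2 glue
class of `D₅*/D₅` is represented by `β` with `4β ≡ 2e₁ (mod 2D₅)`.  Then for any root `s`,
`s + 4β + 2D₅` and `s + 2D₅` are conjugate under the Weyl group of `D₅`: some element `w`
(a coordinate permutation composed with an even number of sign changes) satisfies
`w(s) ≡ s + 2e₁ (mod 2D₅)`. -/
theorem D5_root_glue_conjugate (s : Fin 5 → ℤ)
    (hroot : (∑ i, (s i) ^ 2) = 2) (hD5 : Even (∑ i, s i)) :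
    ∃ (σ : Equiv.Perm (Fin 5)) (ε : Fin 5 → ℤ),
      (∀ i, ε i = 1 ∨ ε i = -1) ∧ (∏ i, ε i) = 1 ∧
      ∃ y : Fin 5 → ℤ, Even (∑ i, y i) ∧
        (fun i => ε i * s (σ i)) =
          (s + 2 • Pi.single (0 : Fin 5) (1 : ℤ)) + 2 • y := by
  have hsum : s 0 ^ 2 + s 1 ^ 2 + s 2 ^ 2 + s 3 ^ 2 + s 4 ^ 2 = 2 := by
    rw [Fin.sum_univ_five] at hroot; exact hroot
  have hb : ∀ i : Fin 5, s i = -1 ∨ s i = 0 ∨ s i = 1 := by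
    intro i
    have h1 : (s i) ^ 2 ≤ ∑ k, (s k) ^ 2 :=
      Finset.single_le_sum (fun k _ => sq_nonneg (s k)) (Finset.mem_univ i)
    rw [hroot] at h1
    have h2 : -1 ≤ s i := by nlinarith
    have h3 : s i ≤ 1 := by nlinarith
    omega
  have hq : ∀ i : Fin 5, ((s i) ^ 2 = 0 ∧ s i = 0) ∨
      ((s i) ^ 2 = 1 ∧ (s i = 1 ∨ s i = -1)) := by
    intro i
    rcases hb i with h | h | h <;> simp [h]
  have hodd : ∃ j : Fin 5, j ≠ 0 ∧ Odd (s 0 + s j) := by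
    have hd : (s 0 + s 1) % 2 = 1 ∨ (s 0 + s 2) % 2 = 1 ∨
        (s 0 + s 3) % 2 = 1 ∨ (s 0 + s 4) % 2 = 1 := by
      rcases hq 0 with ⟨e0, h0⟩ | ⟨e0, h0 | h0⟩ <;>
      rcases hq 1 with ⟨e1, h1⟩ | ⟨e1, h1 | h1⟩ <;>
      rcases hq 2 with ⟨e2, h2⟩ | ⟨e2, h2 | h2⟩ <;>
      rcases hq 3 with ⟨e3, h3⟩ | ⟨e3, h3 | h3⟩ <;>
      rcases hq 4 with ⟨e4, h4⟩ | ⟨e4, h4 | h4⟩ <;>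
      rw [e0, e1, e2, e3, e4] at hsum <;> omega
    rcases hd with h | h | h | h
    · exact ⟨1, by decide, Int.odd_iff.2 h⟩
    · exact ⟨2, by decide, Int.odd_iff.2 h⟩
    · exact ⟨3, by decide, Int.odd_iff.2 h⟩
    · exact ⟨4, by decide, Int.odd_iff.2 h⟩
  obtain ⟨j, hj0, hjodd⟩ := hodd
  refine ⟨1, fun i => if i = 0 ∨ i = j then -1 else 1,
    fun i => by dsimp only; split <;> simp, ?_,
    ((Pi.single (0 : Fin 5) (-s 0 - 1) : Fin 5 → ℤ) + Pi.single j (-s j)), ?_, ?_⟩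
  · fin_cases j <;> first
      | exact absurd rfl hj0
      | decide
  · have h1 : ∑ i, ((Pi.single (0 : Fin 5) (-s 0 - 1) + Pi.single j (-s j) : Fin 5 → ℤ)) i
        = (-s 0 - 1) + (-s j) := by
      simp only [Pi.add_apply, Finset.sum_add_distrib, Finset.sum_pi_single',
        Finset.mem_univ, if_true]
    rw [h1]
    rcases hjodd with ⟨k, hk⟩
    exact ⟨-k - 1, by linarith⟩
  · funext i
    simp only [Equiv.Perm.coe_one, id_eq, Pi.add_apply, Pi.smul_apply, smul_eq_mul,
      Pi.single_apply]
    by_cases h0 : i = 0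
    · subst h0
      have : ¬ ((0 : Fin 5) = j) := fun h => hj0 h.symm
      simp [this]
      ring
    · by_cases hj : i = j
      · subst hj
        simp [h0]
        ring
      · simp [h0, hj]
end
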